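/- arXiv:math/0110074 — 7 statements merged into one kernel-verified Lean document; each statement's English description precedes it below -/
import Mathlib

section
/- Let A be a commutative ring, I a prime ideal of A, and m_1, …, m_k maximal ideals of A such that I ≠ m_j for every j. Let d be a natural number and a ∈ A. If for every s ∈ m_1 ∩ ⋯ ∩ m_k there exists ν ∈ ℕ with s^ν · a ∈ I^d, then there exists s ∈ A with s ∉ I and s · a ∈ I^d. -/
/-- Lemma 1.3: if `a` lies in `I^d` locally away from finitely many maximal ideals
`m_1, …, m_k` (all distinct from the prime `I`), then `a` lies in the symbolic power
`I^{(d)}`, i.e. there is `s ∉ I` with `s * a ∈ I^d`. -/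
theorem symbolic_power_of_locally_in_power
    {A : Type*} [CommRing A] (I : Ideal A) (hI : I.IsPrime)
    (k : ℕ) (m : Fin k → Ideal A) (hm : ∀ j, (m j).IsMaximal)
    (hne : ∀ j, I ≠ m j) (d : ℕ) (a : A)
    (h : ∀ s ∈ ⨅ j, m j, ∃ ν : ℕ, s ^ ν * a ∈ I ^ d) :
    ∃ s : A, s ∉ I ∧ s * a ∈ I ^ d := by
  have hnle : ¬ (⨅ j, m j) ≤ I := by
    rw [show (⨅ j, m j) = Finset.univ.inf m by
      simp [Finset.inf_eq_iInf]]
    rw [hI.inf_le']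
    rintro ⟨j, -, hj⟩
    exact hne j ((hm j).eq_of_le hI.ne_top hj).symm
  obtain ⟨s, hs, hsI⟩ := Set.not_subset.mp hnle
  obtain ⟨ν, hν⟩ := h s hs
  exact ⟨s ^ ν, fun hc => hsI (hI.mem_of_pow_mem ν hc), hν⟩
end

section
/- Let q = a₁x² + a₂y² + a₃z² + a₄xy + a₅xz + a₆yz ∈ ℂ[x,y,z] with a₁,…,a₆ ∈ ℂ. Suppose that for every b, c ∈ ℂ the binary quadratic form q(b·y + c·z, y, z) ∈ ℂ[y,z] obtained by substituting x = b·y + c·z is the square of a linear form, i.e. equals (α·y + β·z)² for some α, β ∈ ℂ. Then q itself is the square of a linear form: there exist α, β, γ ∈ ℂ with q = (α·x + β·y + γ·z)². -/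
/-!
Substituting `x = b·y + c·z` into `q` gives the binary form `A y² + B yz + C z²` with
`A = a₁b² + a₄b + a₂`, `B = 2a₁bc + a₅b + a₄c + a₆`, `C = a₁c² + a₅c + a₃`, and a binary form
is a square exactly when `B² = 4AC`. Reading this identity at `(b, c) ∈ {0, ±1}²` gives
`a₆² = 4a₂a₃`, `a₄² = 4a₁a₂`, `a₅² = 4a₁a₃` and `2a₁a₆ = a₄a₅`, from which square roots of
the coefficients assemble into a linear form `αx + βy + γz` squaring to `q`.
-/

open MvPolynomial

section Forms

variable {R : Type*} [CommRing R]

noncomputable def binaryQuadratic (A B C : R) : MvPolynomial (Fin 2) R :=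
  MvPolynomial.C A * X 0 ^ 2 + MvPolynomial.C B * X 0 * X 1 + MvPolynomial.C C * X 1 ^ 2

noncomputable def ternaryQuadratic (a₁ a₂ a₃ a₄ a₅ a₆ : R) : MvPolynomial (Fin 3) R :=
  MvPolynomial.C a₁ * X 0 ^ 2 + MvPolynomial.C a₂ * X 1 ^ 2
    + MvPolynomial.C a₃ * X 2 ^ 2 + MvPolynomial.C a₄ * X 0 * X 1
    + MvPolynomial.C a₅ * X 0 * X 2 + MvPolynomial.C a₆ * X 1 * X 2

theorem aeval_ternaryQuadratic_section (a₁ a₂ a₃ a₄ a₅ a₆ b c : R) :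
    aeval ![MvPolynomial.C b * X 0 + MvPolynomial.C c * X 1,
        (X 0 : MvPolynomial (Fin 2) R), X 1] (ternaryQuadratic a₁ a₂ a₃ a₄ a₅ a₆)
      = binaryQuadratic (a₁ * b ^ 2 + a₄ * b + a₂) (2 * a₁ * b * c + a₅ * b + a₄ * c + a₆)
          (a₁ * c ^ 2 + a₅ * c + a₃) := by
  simp only [ternaryQuadratic, binaryQuadratic, map_add, map_mul, map_pow, aeval_C, aeval_X,
    algebraMap_eq, Matrix.cons_val_zero, Matrix.cons_val_one, Matrix.cons_val_two,
    Matrix.head_cons, Matrix.tail_cons, map_ofNat]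
  ring

theorem discr_eq_zero_of_binaryQuadratic_eq_sq {A B C α β : R}
    (h : binaryQuadratic A B C = (MvPolynomial.C α * X 0 + MvPolynomial.C β * X 1) ^ 2) :
    B ^ 2 = 4 * A * C := by
  have eval_at (v : Fin 2 → R) := congrArg (eval v) h
  have hA := eval_at ![1, 0]
  have hC := eval_at ![0, 1]
  have hABC := eval_at ![1, 1]
  simp only [binaryQuadratic, map_add, map_mul, map_pow, eval_C, eval_X, Matrix.cons_val_zero,
    Matrix.cons_val_one, Matrix.cons_val_fin_one] at hA hC hABC
  linear_combination (B + 2 * α * β) * (hABC - hA - hC) - 4 * A * hC - 4 * β ^ 2 * hA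

theorem ternaryQuadratic_eq_sq (α β γ : R) :
    ternaryQuadratic (α ^ 2) (β ^ 2) (γ ^ 2) (2 * α * β) (2 * α * γ) (2 * β * γ)
      = (MvPolynomial.C α * X 0 + MvPolynomial.C β * X 1 + MvPolynomial.C γ * X 2) ^ 2 := by
  simp only [ternaryQuadratic, map_mul, map_pow, map_ofNat]
  ring

end Forms

section Coefficients

variable {K : Type*} [Field K] [NeZero (2 : K)]

theorem coeff_relations_of_forall_discr_eq_zero {a₁ a₂ a₃ a₄ a₅ a₆ : K}
    (h : ∀ b c : K, (2 * a₁ * b * c + a₅ * b + a₄ * c + a₆) ^ 2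
      = 4 * (a₁ * b ^ 2 + a₄ * b + a₂) * (a₁ * c ^ 2 + a₅ * c + a₃)) :
    a₆ ^ 2 = 4 * a₂ * a₃ ∧ a₄ ^ 2 = 4 * a₁ * a₂ ∧ a₅ ^ 2 = 4 * a₁ * a₃ ∧
      2 * a₁ * a₆ = a₄ * a₅ := by
  have cancel_two {u v : K} (huv : 2 * u = 2 * v) : u = v :=
    mul_left_cancel₀ two_ne_zero huv
  refine ⟨by linear_combination h 0 0, cancel_two ?_, cancel_two ?_, cancel_two ?_⟩
  · linear_combination h 0 1 + h 0 (-1) - 2 * h 0 0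
  · linear_combination h 1 0 + h (-1) 0 - 2 * h 0 0
  · linear_combination h 1 1 - h 1 0 - h 0 1 + h 0 0

variable [IsAlgClosed K]

omit [NeZero (2 : K)] in
theorem exists_sq_of_discr_eq_zero {A B C : K} (h : B ^ 2 = 4 * A * C) :
    ∃ β γ : K, A = β ^ 2 ∧ C = γ ^ 2 ∧ B = 2 * β * γ := by
  obtain ⟨γ, rfl⟩ := IsAlgClosed.exists_pow_nat_eq C two_pos
  obtain ⟨β, rfl⟩ := IsAlgClosed.exists_pow_nat_eq A two_pos
  have : (B - 2 * β * γ) * (B + 2 * β * γ) = 0 := by linear_combination h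
  rcases mul_eq_zero.1 this with hB | hB
  · exact ⟨β, γ, rfl, rfl, by linear_combination hB⟩
  · exact ⟨-β, γ, by ring, rfl, by linear_combination hB⟩

theorem exists_sq_of_coeff_relations {a₁ a₂ a₃ a₄ a₅ a₆ : K}
    (h₂₃ : a₆ ^ 2 = 4 * a₂ * a₃) (h₁₂ : a₄ ^ 2 = 4 * a₁ * a₂) (h₁₃ : a₅ ^ 2 = 4 * a₁ * a₃)
    (h₁ : 2 * a₁ * a₆ = a₄ * a₅) :
    ∃ α β γ : K, a₁ = α ^ 2 ∧ a₂ = β ^ 2 ∧ a₃ = γ ^ 2 ∧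
      a₄ = 2 * α * β ∧ a₅ = 2 * α * γ ∧ a₆ = 2 * β * γ := by
  rcases eq_or_ne a₁ 0 with rfl | ha₁
  · have ha₄ : a₄ = 0 := pow_eq_zero_iff two_ne_zero |>.1 (by linear_combination h₁₂)
    have ha₅ : a₅ = 0 := pow_eq_zero_iff two_ne_zero |>.1 (by linear_combination h₁₃)
    obtain ⟨β, γ, rfl, rfl, rfl⟩ := exists_sq_of_discr_eq_zero h₂₃
    exact ⟨0, β, γ, by ring, rfl, rfl, by simp [ha₄], by simp [ha₅], rfl⟩
  · obtain ⟨α, rfl⟩ := IsAlgClosed.exists_pow_nat_eq a₁ two_pos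
    have hα : α ≠ 0 := by rintro rfl; simp at ha₁
    refine ⟨α, a₄ / (2 * α), a₅ / (2 * α), rfl, ?_, ?_, by field_simp, by field_simp, ?_⟩
    · field_simp
      linear_combination -h₁₂
    · field_simp
      linear_combination -h₁₃
    · field_simp
      linear_combination h₁

end Coefficients

/-- The Claim inside Lemma 4.4: if every substitution `x = b·y + c·z` turns the ternary
quadratic `q` into the square of a linear binary form, then `q` itself is the square of a
linear form. Variables: `x = X 0`, `y = X 1`, `z = X 2` in `ℂ[x,y,z]`, and `y = X 0`,
`z = X 1` in `ℂ[y,z]`. -/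
theorem ternary_quadratic_square_of_all_sections_square
    (a₁ a₂ a₃ a₄ a₅ a₆ : ℂ)
    (q : MvPolynomial (Fin 3) ℂ)
    (hq : q = MvPolynomial.C a₁ * X 0 ^ 2 + MvPolynomial.C a₂ * X 1 ^ 2
        + MvPolynomial.C a₃ * X 2 ^ 2 + MvPolynomial.C a₄ * X 0 * X 1
        + MvPolynomial.C a₅ * X 0 * X 2 + MvPolynomial.C a₆ * X 1 * X 2)
    (h : ∀ b c : ℂ, ∃ α β : ℂ,
      (aeval ![MvPolynomial.C b * X 0 + MvPolynomial.C c * X 1,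
               (X 0 : MvPolynomial (Fin 2) ℂ), X 1] q)
        = (MvPolynomial.C α * X 0 + MvPolynomial.C β * X 1) ^ 2) :
    ∃ α β γ : ℂ,
      q = (MvPolynomial.C α * X 0 + MvPolynomial.C β * X 1
            + MvPolynomial.C γ * X 2) ^ 2 := by
  change q = ternaryQuadratic a₁ a₂ a₃ a₄ a₅ a₆ at hq
  subst hq
  have discr_eq_zero (b c : ℂ) : (2 * a₁ * b * c + a₅ * b + a₄ * c + a₆) ^ 2
      = 4 * (a₁ * b ^ 2 + a₄ * b + a₂) * (a₁ * c ^ 2 + a₅ * c + a₃) := by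
    obtain ⟨α, β, hsq⟩ := h b c
    rw [aeval_ternaryQuadratic_section] at hsq
    exact discr_eq_zero_of_binaryQuadratic_eq_sq hsq
  obtain ⟨h₂₃, h₁₂, h₁₃, h₁⟩ := coeff_relations_of_forall_discr_eq_zero discr_eq_zero
  obtain ⟨α, β, γ, rfl, rfl, rfl, rfl, rfl, rfl⟩ := exists_sq_of_coeff_relations h₂₃ h₁₂ h₁₃ h₁
  exact ⟨α, β, γ, ternaryQuadratic_eq_sq α β γ⟩
end

section
/- Let n ≥ 1 and k be integers with 1 ≤ k ≤ (n+1)/2. For rationals b₁,…,b_n, with the convention b₀ = b_{n+1} = 0, the following are equivalent: (i) for every 1 ≤ i ≤ n one has b_{i−1} − 2b_i + b_{i+1} + δ_{i,k} = −δ_{i,n−k+1}; (ii) b_i = min(i, min(k, n+1−i)) for every 1 ≤ i ≤ n. In particular the system (i) has a unique rational solution, this solution is integral, and its (n−k+1)-st entry equals k. -/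
lemma an_cycle_lin (n : ℕ) (c : ℕ → ℚ) (h0 : c 0 = 0)
    (hrec : ∀ i : ℕ, 1 ≤ i → i ≤ n → c (i - 1) - 2 * c i + c (i + 1) = 0) :
    ∀ i : ℕ, i ≤ n + 1 → c i = i * c 1 := by
  intro i
  induction i using Nat.strong_induction_on with
  | _ i ih =>
    intro hi
    match i with
    | 0 => simp [h0]
    | 1 => simp
    | (j+2) =>
      have h1 := ih j (by omega) (by omega)
      have h2 := ih (j+1) (by omega) (by omega)
      have h3 := hrec (j+1) (by omega) (by omega)
      simp only [Nat.add_sub_cancel] at h3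
      have h4 : c (j + 1 + 1) = 2 * c (j+1) - c j := by linarith
      rw [show j + 2 = j + 1 + 1 from rfl, h4, h1, h2]
      push_cast
      ring

lemma an_cycle_fsys (n k : ℕ) (hn : 1 ≤ n) (hk1 : 1 ≤ k) (hk2 : 2 * k ≤ n + 1)
    (i : ℕ) (h1 : 1 ≤ i) (h2 : i ≤ n) :
    ((min (i-1) (min k (n + 1 - (i-1))) : ℕ) : ℚ)
      - 2 * ((min i (min k (n + 1 - i)) : ℕ) : ℚ)
      + ((min (i+1) (min k (n + 1 - (i+1))) : ℕ) : ℚ)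
      + (if i = k then 1 else 0)
      = -(if i = n - k + 1 then 1 else 0) := by
  set a := min (i-1) (min k (n + 1 - (i-1))) with ha
  set bb := min i (min k (n + 1 - i)) with hbb
  set cc := min (i+1) (min k (n + 1 - (i+1))) with hcc
  by_cases hik : i = k <;> by_cases hik' : i = n - k + 1
  · simp only [if_pos hik, if_pos hik']
    have h : a + cc + 2 = 2 * bb := by omega
    have h' : (a : ℚ) + cc + 2 = 2 * bb := by exact_mod_cast h
    linarith
  · simp only [if_pos hik, if_neg hik']
    have h : a + cc + 1 = 2 * bb := by omega
    have h' : (a : ℚ) + cc + 1 = 2 * bb := by exact_mod_cast h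
    linarith
  · simp only [if_neg hik, if_pos hik']
    have h : a + cc + 1 = 2 * bb := by omega
    have h' : (a : ℚ) + cc + 1 = 2 * bb := by exact_mod_cast h
    linarith
  · simp only [if_neg hik, if_neg hik']
    have h : a + cc = 2 * bb := by omega
    have h' : (a : ℚ) + cc = 2 * bb := by exact_mod_cast h
    linarith

/-- Proposition 4.6.1: the `A_n` fundamental cycle computation. For `1 ≤ k ≤ (n+1)/2`,
a vector `b` (with the convention `b 0 = b (n+1) = 0`) satisfies the system
`b_{i−1} − 2b_i + b_{i+1} + δ_{i,k} = −δ_{i,n−k+1}` for `1 ≤ i ≤ n` iff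
`b_i = min(i, min(k, n+1−i))` for all `1 ≤ i ≤ n`. In particular the solution is unique,
integral, and its `(n−k+1)`-st entry equals `k`. -/
theorem an_cycle_system (n k : ℕ) (hn : 1 ≤ n) (hk1 : 1 ≤ k) (hk2 : 2 * k ≤ n + 1)
    (b : ℕ → ℚ) (hb0 : b 0 = 0) (hbtop : b (n + 1) = 0) :
    (∀ i : ℕ, 1 ≤ i → i ≤ n →
        b (i - 1) - 2 * b i + b (i + 1) + (if i = k then 1 else 0)
          = -(if i = n - k + 1 then 1 else 0))
      ↔ (∀ i : ℕ, 1 ≤ i → i ≤ n →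
        b i = ((min i (min k (n + 1 - i)) : ℕ) : ℚ)) := by
  set f : ℕ → ℚ := fun j => ((min j (min k (n + 1 - j)) : ℕ) : ℚ) with hf
  have hf0 : f 0 = 0 := by
    show ((min 0 (min k (n + 1 - 0)) : ℕ) : ℚ) = 0
    rw [Nat.zero_min]; norm_num
  have hftop : f (n + 1) = 0 := by
    show ((min (n+1) (min k (n + 1 - (n+1))) : ℕ) : ℚ) = 0
    have h : min (n+1) (min k (n + 1 - (n+1))) = 0 := by omega
    rw [h]; norm_num
  constructor
  · intro hsys i h1 h2
    set c : ℕ → ℚ := fun j => b j - f j with hc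
    have hc0 : c 0 = 0 := by simp only [hc, hb0, hf0, sub_zero]
    have hrec : ∀ j : ℕ, 1 ≤ j → j ≤ n → c (j - 1) - 2 * c j + c (j + 1) = 0 := by
      intro j hj1 hj2
      have hbj := hsys j hj1 hj2
      have hfs := an_cycle_fsys n k hn hk1 hk2 j hj1 hj2
      show (b (j-1) - f (j-1)) - 2 * (b j - f j) + (b (j+1) - f (j+1)) = 0
      have hfe : f (j-1) - 2 * f j + f (j+1) + (if j = k then 1 else 0)
          = -(if j = n - k + 1 then 1 else 0) := hfs
      linarith
    have hlin := an_cycle_lin n c hc0 hrec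
    have hctop : c (n + 1) = 0 := by
      show b (n+1) - f (n+1) = 0
      rw [hbtop, hftop]; ring
    have hc1 : c 1 = 0 := by
      have h := hlin (n + 1) le_rfl
      rw [hctop] at h
      have hne : ((n + 1 : ℕ) : ℚ) ≠ 0 := by exact_mod_cast Nat.succ_ne_zero n
      exact (mul_eq_zero.mp h.symm).resolve_left hne
    have hci : c i = 0 := by rw [hlin i (by omega), hc1, mul_zero]
    have hbf : b i = f i := by
      have : b i - f i = 0 := hci
      linarith
    exact hbf
  · intro hx i h1 h2
    have hbi : b i = f i := hx i h1 h2
    have hbm : b (i - 1) = f (i - 1) := by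
      rcases Nat.eq_or_lt_of_le h1 with h | h
      · rw [← h]; simpa [hb0] using hf0.symm
      · exact hx (i - 1) (by omega) (by omega)
    have hbp : b (i + 1) = f (i + 1) := by
      rcases Nat.eq_or_lt_of_le h2 with h | h
      · rw [h]; rw [hbtop, hftop]
      · exact hx (i + 1) (by omega) (by omega)
    rw [hbm, hbi, hbp]
    exact an_cycle_fsys n k hn hk1 hk2 i h1 h2
end

section
/- Let n ≥ 4. A rational vector b = (b₁,…,b_n) satisfies the D_n cycle system with marking p = 1 and excess q = 1 if and only if b_i = 2 for all 1 ≤ i ≤ n−2 and b_{n−1} = b_n = 1. In particular the system has a unique rational solution, it is integral, and its first entry is 2. -/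
/-- Adjacency in the `D_n` dual graph (`n ≥ 4`): vertices `1, …, n`, with `i` adjacent to
`i+1` for `1 ≤ i ≤ n−3`, and vertex `n−2` adjacent to both `n−1` and `n`. -/
def dnAdj (n i j : ℕ) : Prop :=
  (j = i + 1 ∧ 1 ≤ i ∧ i ≤ n - 3) ∨ (i = j + 1 ∧ 1 ≤ j ∧ j ≤ n - 3) ∨
  (i = n - 2 ∧ (j = n - 1 ∨ j = n)) ∨ (j = n - 2 ∧ (i = n - 1 ∨ i = n))

instance (n i j : ℕ) : Decidable (dnAdj n i j) := by unfold dnAdj; infer_instance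

/-- `b` satisfies the `D_n` cycle system with marking `p` and excess `q`:
for every vertex `i`, `−2b_i + Σ_{j adjacent to i} b_j + δ_{i,p} = −δ_{i,q}`. -/
def dnSystem {R : Type*} [CommRing R] (n p q : ℕ) (b : ℕ → R) : Prop :=
  ∀ i : ℕ, 1 ≤ i → i ≤ n →
    -2 * b i + (∑ j ∈ Finset.Icc 1 n, if dnAdj n i j then b j else 0)
      + (if i = p then 1 else 0) = -(if i = q then 1 else 0)

lemma fil_one (n : ℕ) (hn : 4 ≤ n) :
    (Finset.Icc 1 n).filter (dnAdj n 1) = {2} := by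
  ext j
  simp only [Finset.mem_filter, Finset.mem_Icc, Finset.mem_singleton, dnAdj, true_and, and_true]
  omega

lemma fil_mid (n i : ℕ) (hn : 4 ≤ n) (h2 : 2 ≤ i) (h3 : i ≤ n - 3) :
    (Finset.Icc 1 n).filter (dnAdj n i) = {i - 1, i + 1} := by
  ext j
  simp only [Finset.mem_filter, Finset.mem_Icc, Finset.mem_insert, Finset.mem_singleton, dnAdj, true_and, and_true]
  omega

lemma fil_top (n : ℕ) (hn : 4 ≤ n) :
    (Finset.Icc 1 n).filter (dnAdj n (n - 2)) = {n - 3, n - 1, n} := by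
  ext j
  simp only [Finset.mem_filter, Finset.mem_Icc, Finset.mem_insert, Finset.mem_singleton, dnAdj, true_and, and_true]
  omega

lemma fil_end (n i : ℕ) (hn : 4 ≤ n) (h : i = n - 1 ∨ i = n) :
    (Finset.Icc 1 n).filter (dnAdj n i) = {n - 2} := by
  ext j
  simp only [Finset.mem_filter, Finset.mem_Icc, Finset.mem_singleton, dnAdj, true_and, and_true]
  omega

/-- Proposition 4.6.2.a: for `n ≥ 4`, the `D_n` cycle system with marking `p = 1` and
excess `q = 1` has the unique (integral) solution `b_i = 2` for `i ≤ n−2`,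
`b_{n−1} = b_n = 1`. -/
theorem dn_cycle_system_left (n : ℕ) (hn : 4 ≤ n) (b : ℕ → ℚ) :
    dnSystem n 1 1 b ↔
      ((∀ i : ℕ, 1 ≤ i → i ≤ n - 2 → b i = 2) ∧ b (n - 1) = 1 ∧ b n = 1) := by
  constructor
  · intro hsys
    -- equation at 1
    have h1 := hsys 1 le_rfl (by omega)
    rw [← Finset.sum_filter, fil_one n hn, Finset.sum_singleton] at h1
    norm_num at h1
    -- equations at the ends
    have hend : ∀ i, i = n - 1 ∨ i = n → -2 * b i + b (n - 2) = 0 := by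
      intro i hi
      have h := hsys i (by omega) (by omega)
      rw [← Finset.sum_filter, fil_end n i hn hi, Finset.sum_singleton] at h
      have : i ≠ 1 := by omega
      simp only [if_neg this, add_zero, neg_zero] at h
      linarith
    have hn1 := hend (n - 1) (Or.inl rfl)
    have hnn := hend n (Or.inr rfl)
    -- equation at n - 2
    have htop : b (n - 3) = b (n - 2) := by
      have h := hsys (n - 2) (by omega) (by omega)
      rw [← Finset.sum_filter, fil_top n hn] at h
      rw [Finset.sum_insert (by simp only [Finset.mem_insert, Finset.mem_singleton]; omega), Finset.sum_insert (by simp only [Finset.mem_insert, Finset.mem_singleton]; omega),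
        Finset.sum_singleton] at h
      have : n - 2 ≠ 1 := by omega
      simp only [if_neg this, add_zero, neg_zero] at h
      linarith
    -- middle equations
    have hmid : ∀ i, 2 ≤ i → i ≤ n - 3 → b (i - 1) + b (i + 1) = 2 * b i := by
      intro i h2 h3
      have h := hsys i (by omega) (by omega)
      rw [← Finset.sum_filter, fil_mid n i hn h2 h3] at h
      rw [Finset.sum_insert (by simp only [Finset.mem_insert, Finset.mem_singleton]; omega), Finset.sum_singleton] at h
      have : i ≠ 1 := by omega
      simp only [if_neg this, add_zero, neg_zero] at h
      linarith
    -- descending induction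
    have Q : ∀ k, k ≤ n - 3 → b (n - 2 - k) = b (n - 2) := by
      intro k
      induction k using Nat.strong_induction_on with
      | _ k ih =>
        match k with
        | 0 => intro _; rfl
        | 1 =>
          intro _
          have : n - 2 - 1 = n - 3 := by omega
          rw [this]; exact htop
        | (k + 2) =>
          intro hk
          have e1 : b (n - 2 - (k + 1) - 1) + b (n - 2 - (k + 1) + 1)
              = 2 * b (n - 2 - (k + 1)) :=
            hmid (n - 2 - (k + 1)) (by omega) (by omega)
          have q1 : b (n - 2 - (k + 1)) = b (n - 2) := ih (k + 1) (by omega) (by omega)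
          have q0 : b (n - 2 - k) = b (n - 2) := ih k (by omega) (by omega)
          have e2 : n - 2 - (k + 1) + 1 = n - 2 - k := by omega
          have e3 : n - 2 - (k + 1) - 1 = n - 2 - (k + 2) := by omega
          rw [e2, e3, q1, q0] at e1
          linarith
    have hb1 : b 1 = b (n - 2) := by
      have := Q (n - 3) le_rfl
      rwa [show n - 2 - (n - 3) = 1 by omega] at this
    have hb2 : b 2 = b (n - 2) := by
      have := Q (n - 4) (by omega)
      rwa [show n - 2 - (n - 4) = 2 by omega] at this
    have hval : b (n - 2) = 2 := by rw [hb1, hb2] at h1; linarith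
    refine ⟨?_, by linarith, by linarith⟩
    intro i hi1 hi2
    have := Q (n - 2 - i) (by omega)
    rwa [show n - 2 - (n - 2 - i) = i by omega, hval] at this
  · rintro ⟨h2, hn1, hnn⟩ i hi1 hi2
    rw [← Finset.sum_filter]
    rcases eq_or_ne i 1 with rfl | hne
    · rw [fil_one n hn, Finset.sum_singleton, h2 2 (by omega) (by omega), h2 1 (by omega) (by omega)]
      norm_num
    · rcases le_or_gt i (n - 3) with hle | hgt
      · rw [fil_mid n i hn (by omega) hle, Finset.sum_insert (by simp only [Finset.mem_insert, Finset.mem_singleton]; omega),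
          Finset.sum_singleton, h2 (i - 1) (by omega) (by omega),
          h2 (i + 1) (by omega) (by omega), h2 i (by omega) (by omega), if_neg hne]
        norm_num
      · rcases eq_or_ne i (n - 2) with rfl | hne2
        · rw [fil_top n hn, Finset.sum_insert (by simp only [Finset.mem_insert, Finset.mem_singleton]; omega),
            Finset.sum_insert (by simp only [Finset.mem_insert, Finset.mem_singleton]; omega), Finset.sum_singleton,
            h2 (n - 3) (by omega) (by omega), h2 (n - 2) (by omega) (by omega),
            hn1, hnn, if_neg hne]
          norm_num
        · rw [fil_end n i hn (by omega), Finset.sum_singleton,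
            h2 (n - 2) (by omega) (by omega), if_neg hne]
          have : b i = 1 := by
            rcases (show i = n - 1 ∨ i = n by omega) with rfl | rfl
            · exact hn1
            · exact hnn
          rw [this]; norm_num
end

section
/- Let n ≥ 5 be odd. A rational vector b = (b₁,…,b_n) satisfies the D_n cycle system with marking p = n−1 and excess q = n if and only if b_i = i for all 1 ≤ i ≤ n−2 and b_{n−1} = b_n = (n−1)/2. In particular the system has a unique rational solution and this solution is integral. -/
/-!
The equations at the vertices `2, …, n − 3` of the long arm say that `b` has vanishing second
differences there, and the equation at vertex `1` says `b 2 = 2 b 1`; hence `b i = i · b 1` along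
the arm `1, …, n − 2`. The two tip equations give `2 b (n−1) = 2 b n = b (n−2) + 1`, and substituting
everything into the equation at the branch vertex `n − 2` leaves `b 1 = 1`.
-/

open Finset

section NeighborSums

variable {M : Type*} [AddCommMonoid M] {n : ℕ}

lemma sum_ite_dnAdj_eq_sum {i : ℕ} (s : Finset ℕ) (hs : ∀ j, (j ∈ Icc 1 n ∧ dnAdj n i j) ↔ j ∈ s)
    (b : ℕ → M) : (∑ j ∈ Icc 1 n, if dnAdj n i j then b j else 0) = ∑ j ∈ s, b j := by
  rw [← sum_filter]
  exact sum_congr (by ext j; rw [mem_filter]; exact hs j) fun _ _ => rfl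

lemma sum_ite_dnAdj_one (hn : 4 ≤ n) (b : ℕ → M) :
    (∑ j ∈ Icc 1 n, if dnAdj n 1 j then b j else 0) = b 2 := by
  rw [sum_ite_dnAdj_eq_sum {2} (fun j => by simp only [mem_Icc, mem_singleton, dnAdj]; omega),
    sum_singleton]

lemma sum_ite_dnAdj_arm {k : ℕ} (hk : 1 ≤ k) (hkn : k + 4 ≤ n) (b : ℕ → M) :
    (∑ j ∈ Icc 1 n, if dnAdj n (k + 1) j then b j else 0) = b k + b (k + 2) := by
  rw [sum_ite_dnAdj_eq_sum {k, k + 2}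
      (fun j => by simp only [mem_Icc, mem_insert, mem_singleton, dnAdj]; omega),
    sum_pair (by omega)]

lemma sum_ite_dnAdj_branch (hn : 4 ≤ n) (b : ℕ → M) :
    (∑ j ∈ Icc 1 n, if dnAdj n (n - 2) j then b j else 0) = b (n - 3) + (b (n - 1) + b n) := by
  rw [sum_ite_dnAdj_eq_sum {n - 3, n - 1, n}
      (fun j => by simp only [mem_Icc, mem_insert, mem_singleton, dnAdj, true_and]; omega),
    sum_insert (by simp only [mem_insert, mem_singleton, not_or]; omega), sum_pair (by omega)]

lemma sum_ite_dnAdj_tip {i : ℕ} (hn : 4 ≤ n) (hi : i = n - 1 ∨ i = n) (b : ℕ → M) :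
    (∑ j ∈ Icc 1 n, if dnAdj n i j then b j else 0) = b (n - 2) := by
  rw [sum_ite_dnAdj_eq_sum {n - 2} (fun j => by simp only [mem_Icc, mem_singleton, dnAdj]; omega),
    sum_singleton]

end NeighborSums

lemma eq_natCast_mul_of_add_eq_two_mul {R : Type*} [CommRing R] {b : ℕ → R} {N : ℕ}
    (h₁ : b 2 = 2 * b 1) (h : ∀ k, 1 ≤ k → k + 2 ≤ N → b k + b (k + 2) = 2 * b (k + 1)) :
    ∀ k, 1 ≤ k → k ≤ N → b k = k * b 1 := by
  intro k
  induction k using Nat.strong_induction_on with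
  | _ k ih =>
    match k with
    | 0 => omega
    | 1 => simp
    | 2 => simp [h₁]
    | k + 3 =>
      intro _ hk
      have hk₁ := ih (k + 1) (by omega) (by omega) (by omega)
      have hk₂ := ih (k + 2) (by omega) (by omega) (by omega)
      push_cast at hk₁ hk₂ ⊢
      linear_combination h (k + 1) (by omega) (by omega) - hk₁ + 2 * hk₂

lemma dnSystem_pred_self_iff {R : Type*} [CommRing R] {n : ℕ} (hn : 4 ≤ n) (b : ℕ → R) :
    dnSystem n (n - 1) n b ↔
      b 2 = 2 * b 1 ∧ (∀ k, 1 ≤ k → k + 2 ≤ n - 2 → b k + b (k + 2) = 2 * b (k + 1)) ∧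
        b (n - 3) + b (n - 1) + b n = 2 * b (n - 2) ∧
        2 * b (n - 1) = b (n - 2) + 1 ∧ 2 * b n = b (n - 2) + 1 := by
  constructor
  · intro h
    have e₁ := h 1 le_rfl (by omega)
    have eₙ₂ := h (n - 2) (by omega) (by omega)
    have eₙ₁ := h (n - 1) (by omega) (by omega)
    have eₙ := h n (by omega) le_rfl
    rw [sum_ite_dnAdj_one hn, if_neg (by omega), if_neg (by omega)] at e₁
    rw [sum_ite_dnAdj_branch hn, if_neg (by omega), if_neg (by omega)] at eₙ₂
    rw [sum_ite_dnAdj_tip hn (.inl rfl), if_pos rfl, if_neg (by omega)] at eₙ₁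
    rw [sum_ite_dnAdj_tip hn (.inr rfl), if_neg (by omega), if_pos rfl] at eₙ
    refine ⟨by linear_combination e₁, fun k hk hkn => ?_, by linear_combination eₙ₂,
      by linear_combination -eₙ₁, by linear_combination -eₙ⟩
    have eₖ := h (k + 1) (by omega) (by omega)
    rw [sum_ite_dnAdj_arm hk (by omega), if_neg (by omega), if_neg (by omega)] at eₖ
    linear_combination eₖ
  · rintro ⟨e₁, eₖ, eₙ₂, eₙ₁, eₙ⟩ i hi hin
    obtain rfl | ⟨k, hk, rfl, hkn⟩ | rfl | rfl | rfl :
        i = 1 ∨ (∃ k, 1 ≤ k ∧ i = k + 1 ∧ k + 4 ≤ n) ∨ i = n - 2 ∨ i = n - 1 ∨ i = n := by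
      by_cases i = 1 ∨ i = n - 2 ∨ i = n - 1 ∨ i = n
      · omega
      · exact .inr (.inl ⟨i - 1, by omega, by omega, by omega⟩)
    · rw [sum_ite_dnAdj_one hn, if_neg (by omega), if_neg (by omega)]
      linear_combination e₁
    · rw [sum_ite_dnAdj_arm hk hkn, if_neg (by omega), if_neg (by omega)]
      linear_combination eₖ k hk (by omega)
    · rw [sum_ite_dnAdj_branch hn, if_neg (by omega), if_neg (by omega)]
      linear_combination eₙ₂
    · rw [sum_ite_dnAdj_tip hn (.inl rfl), if_pos rfl, if_neg (by omega)]
      linear_combination -eₙ₁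
    · rw [sum_ite_dnAdj_tip hn (.inr rfl), if_neg (by omega), if_pos rfl]
      linear_combination -eₙ

theorem dn_cycle_system_right_odd_general (n : ℕ) (hn : 5 ≤ n) (b : ℕ → ℚ) :
    dnSystem n (n - 1) n b ↔
      ((∀ i : ℕ, 1 ≤ i → i ≤ n - 2 → b i = (i : ℚ)) ∧
        b (n - 1) = ((n : ℚ) - 1) / 2 ∧ b n = ((n : ℚ) - 1) / 2) := by
  have cast₂ : ((n - 2 : ℕ) : ℚ) = n - 2 := by push_cast [Nat.cast_sub (by omega : 2 ≤ n)]; ring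
  have cast₃ : ((n - 3 : ℕ) : ℚ) = n - 3 := by push_cast [Nat.cast_sub (by omega : 3 ≤ n)]; ring
  rw [dnSystem_pred_self_iff (by omega)]
  constructor
  · rintro ⟨e₁, eₖ, eₙ₂, eₙ₁, eₙ⟩
    have arm := eq_natCast_mul_of_add_eq_two_mul e₁ eₖ
    have hn₃ := arm (n - 3) (by omega) (by omega)
    have hn₂ := arm (n - 2) (by omega) le_rfl
    rw [cast₂] at hn₂
    rw [cast₃] at hn₃
    have hb₁ : b 1 = 1 := by linear_combination (-2 * eₙ₂ + eₙ₁ + eₙ + 2 * hn₃ - 2 * hn₂) / 2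
    refine ⟨fun i hi hin => by rw [arm i hi hin, hb₁, mul_one], ?_, ?_⟩
    · linear_combination eₙ₁ / 2 + hn₂ / 2 + (n - 2) * hb₁ / 2
    · linear_combination eₙ / 2 + hn₂ / 2 + (n - 2) * hb₁ / 2
  · rintro ⟨harm, hn₁, hn⟩
    have hn₂ := harm (n - 2) (by omega) le_rfl
    rw [cast₂] at hn₂
    refine ⟨by rw [harm 1 le_rfl (by omega), harm 2 (by omega) (by omega)]; norm_num,
      fun k hk hkn => ?_, ?_, ?_, ?_⟩
    · rw [harm k hk (by omega), harm (k + 1) (by omega) (by omega), harm (k + 2) (by omega) hkn]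
      push_cast; ring
    · rw [harm (n - 3) (by omega) (by omega), cast₃, hn₂, hn₁, hn]; ring
    · rw [hn₁, hn₂]; ring
    · rw [hn, hn₂]; ring

/-- Proposition 4.6, Case 1 (`n` odd, `Γ″` meeting `E_{n−1}`, testing `E = E_n`):
for odd `n ≥ 5`, the `D_n` cycle system with marking `p = n−1` and excess `q = n`
has the unique (integral) solution `b_i = i` for `i ≤ n−2`,
`b_{n−1} = b_n = (n−1)/2`. -/
theorem dn_cycle_system_right_odd (n : ℕ) (hn : 5 ≤ n) (hodd : Odd n) (b : ℕ → ℚ) :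
    dnSystem n (n - 1) n b ↔
      ((∀ i : ℕ, 1 ≤ i → i ≤ n - 2 → b i = (i : ℚ)) ∧
        b (n - 1) = ((n : ℚ) - 1) / 2 ∧ b n = ((n : ℚ) - 1) / 2) :=
  dn_cycle_system_right_odd_general n hn b
end

section
/- Let n ≥ 4 be even. A rational vector b = (b₁,…,b_n) satisfies the D_n cycle system with marking p = n−1 and excess q = n−1 if and only if b_i = i for all 1 ≤ i ≤ n−2, b_{n−1} = n/2, and b_n = (n−2)/2. In particular the system has a unique rational solution and this solution is integral. -/
/-!
Along the chain `1, …, n − 2` the equations say that `b` has vanishing second differences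
(with `b₀ = 0`), so `b_i = i · b₁` there. The two arm equations give `b_{n−1}` and `b_n` in terms
of `b_{n−2}`, and substituting into the equation at the branch vertex `n − 2` forces `b₁ = 1`.
-/

/-- `h2` is the recurrence at `i = 0` for the extension of `f` by `f 0 = 0`. -/
theorem eq_natCast_mul_of_two_mul_sub {R : Type*} [CommRing R] {f : ℕ → R} {m : ℕ}
    (h2 : f 2 = 2 * f 1) (hrec : ∀ i, 1 ≤ i → i ≤ m → f (i + 2) = 2 * f (i + 1) - f i) :
    ∀ i, 1 ≤ i → i ≤ m + 2 → f i = i * f 1 := by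
  have hpair : ∀ i, 1 ≤ i → i ≤ m + 1 → f i = i * f 1 ∧ f (i + 1) = (i + 1) * f 1 := by
    intro i hi1 hi
    induction i, hi1 using Nat.le_induction with
    | base => exact ⟨by simp, by rw [h2]; ring⟩
    | succ k hk ih =>
      obtain ⟨hk0, hk1⟩ := ih (by omega)
      refine ⟨by rw [hk1]; push_cast; ring, ?_⟩
      rw [hrec k hk (by omega), hk0, hk1]
      push_cast
      ring
  intro i hi1 hi
  rcases Nat.lt_or_ge i (m + 2) with him | him
  · exact (hpair i hi1 (by omega)).1
  · obtain rfl : i = m + 2 := by omega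
    rw [(hpair (m + 1) (by omega) le_rfl).2]
    push_cast
    ring

open Finset

section NeighbourSums

variable {M : Type*} [AddCommMonoid M] (b : ℕ → M) (m : ℕ)

theorem sum_dnAdj_one :
    (∑ j ∈ Icc 1 (m + 4), if dnAdj (m + 4) 1 j then b j else 0) = b 2 := by
  rw [← sum_filter, show (Icc 1 (m + 4)).filter (dnAdj (m + 4) 1) = {2} by
    ext j; simp only [mem_filter, mem_Icc, mem_singleton, dnAdj]; omega, sum_singleton]

theorem sum_dnAdj_succ {i : ℕ} (hi : 1 ≤ i) (him : i ≤ m) :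
    (∑ j ∈ Icc 1 (m + 4), if dnAdj (m + 4) (i + 1) j then b j else 0) = b i + b (i + 2) := by
  rw [← sum_filter, show (Icc 1 (m + 4)).filter (dnAdj (m + 4) (i + 1)) = {i, i + 2} by
    ext j; simp only [mem_filter, mem_Icc, mem_insert, mem_singleton, dnAdj]; omega,
    sum_pair (by omega)]

theorem sum_dnAdj_branch :
    (∑ j ∈ Icc 1 (m + 4), if dnAdj (m + 4) (m + 2) j then b j else 0) =
      b (m + 1) + (b (m + 3) + b (m + 4)) := by
  rw [← sum_filter, show (Icc 1 (m + 4)).filter (dnAdj (m + 4) (m + 2)) =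
      {m + 1, m + 3, m + 4} by
    ext j; simp only [mem_filter, mem_Icc, mem_insert, mem_singleton, dnAdj]; omega,
    sum_insert (by simp), sum_pair (by omega)]

theorem sum_dnAdj_of_arm {i : ℕ} (hi : i = m + 3 ∨ i = m + 4) :
    (∑ j ∈ Icc 1 (m + 4), if dnAdj (m + 4) i j then b j else 0) = b (m + 2) := by
  rw [← sum_filter, show (Icc 1 (m + 4)).filter (dnAdj (m + 4) i) = {m + 2} by
    ext j; simp only [mem_filter, mem_Icc, mem_singleton, dnAdj]; omega, sum_singleton]

end NeighbourSums

/-- Writing `n = m + 4` keeps every vertex label free of truncated subtraction. -/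
theorem dnSystem_arm_iff {R : Type*} [CommRing R] (m : ℕ) (b : ℕ → R) :
    dnSystem (m + 4) (m + 3) (m + 3) b ↔
      b 2 = 2 * b 1 ∧ (∀ i, 1 ≤ i → i ≤ m → b (i + 2) = 2 * b (i + 1) - b i) ∧
        b (m + 1) + b (m + 3) + b (m + 4) = 2 * b (m + 2) ∧
        b (m + 2) + 2 = 2 * b (m + 3) ∧ b (m + 2) = 2 * b (m + 4) := by
  constructor
  · intro h
    have hone := h 1 le_rfl (by omega)
    have hbranch := h (m + 2) (by omega) (by omega)
    have hleft := h (m + 3) (by omega) (by omega)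
    have hright := h (m + 4) (by omega) (by omega)
    rw [sum_dnAdj_one, if_neg (by omega)] at hone
    rw [sum_dnAdj_branch, if_neg (by omega)] at hbranch
    rw [sum_dnAdj_of_arm b m (.inl rfl), if_pos rfl] at hleft
    rw [sum_dnAdj_of_arm b m (.inr rfl), if_neg (by omega)] at hright
    refine ⟨by linear_combination hone, fun i hi him => ?_, by linear_combination hbranch,
      by linear_combination hleft, by linear_combination hright⟩
    have hchain := h (i + 1) (by omega) (by omega)
    rw [sum_dnAdj_succ b m hi him, if_neg (by omega)] at hchain
    linear_combination hchain
  · rintro ⟨hone, hchain, hbranch, hleft, hright⟩ i hi1 hi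
    rcases (by omega : i = 1 ∨ (2 ≤ i ∧ i ≤ m + 1) ∨ i = m + 2 ∨ i = m + 3 ∨ i = m + 4) with
      rfl | ⟨hi2, him⟩ | rfl | rfl | rfl
    · rw [sum_dnAdj_one, if_neg (by omega)]
      linear_combination hone
    · obtain ⟨k, rfl⟩ : ∃ k, i = k + 1 := ⟨i - 1, by omega⟩
      rw [sum_dnAdj_succ b m (by omega) (by omega), if_neg (by omega)]
      linear_combination hchain k (by omega) (by omega)
    · rw [sum_dnAdj_branch, if_neg (by omega)]
      linear_combination hbranch
    · rw [sum_dnAdj_of_arm b m (.inl rfl), if_pos rfl]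
      linear_combination hleft
    · rw [sum_dnAdj_of_arm b m (.inr rfl), if_neg (by omega)]
      linear_combination hright

theorem dn_cycle_system_right_even_general (n : ℕ) (hn : 4 ≤ n) (b : ℕ → ℚ) :
    dnSystem n (n - 1) (n - 1) b ↔
      ((∀ i : ℕ, 1 ≤ i → i ≤ n - 2 → b i = (i : ℚ)) ∧
        b (n - 1) = (n : ℚ) / 2 ∧ b n = ((n : ℚ) - 2) / 2) := by
  obtain ⟨m, rfl⟩ : ∃ m, n = m + 4 := ⟨n - 4, by omega⟩
  rw [show m + 4 - 1 = m + 3 by omega, show m + 4 - 2 = m + 2 by omega, dnSystem_arm_iff]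
  push_cast
  constructor
  · rintro ⟨hone, hchain, hbranch, hleft, hright⟩
    have hlin := eq_natCast_mul_of_two_mul_sub hone hchain
    have hm1 := hlin (m + 1) (by omega) (by omega)
    have hm2 := hlin (m + 2) (by omega) le_rfl
    push_cast at hm1 hm2
    have hb1 : b 1 = 1 := by linarith
    rw [hb1, mul_one] at hm1 hm2
    exact ⟨fun i hi1 hi => by rw [hlin i hi1 hi, hb1, mul_one], by linarith, by linarith⟩
  · rintro ⟨hlin, hleft, hright⟩
    have hm1 := hlin (m + 1) (by omega) (by omega)
    have hm2 := hlin (m + 2) (by omega) le_rfl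
    push_cast at hm1 hm2
    refine ⟨by rw [hlin 1 le_rfl (by omega), hlin 2 (by omega) (by omega)]; norm_num,
      fun i hi him => ?_, by linarith, by linarith, by linarith⟩
    rw [hlin i hi (by omega), hlin (i + 1) (by omega) (by omega),
      hlin (i + 2) (by omega) (by omega)]
    push_cast
    ring

/-- Proposition 4.6.2.b.i (`n` even, `Γ″` meeting `E_{n−1}`): for even `n ≥ 4`, the
`D_n` cycle system with marking `p = n−1` and excess `q = n−1` has the unique
(integral) solution `b_i = i` for `i ≤ n−2`, `b_{n−1} = n/2`, `b_n = (n−2)/2`. -/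
theorem dn_cycle_system_right_even (n : ℕ) (hn : 4 ≤ n) (heven : Even n) (b : ℕ → ℚ) :
    dnSystem n (n - 1) (n - 1) b ↔
      ((∀ i : ℕ, 1 ≤ i → i ≤ n - 2 → b i = (i : ℚ)) ∧
        b (n - 1) = (n : ℚ) / 2 ∧ b n = ((n : ℚ) - 2) / 2) :=
  dn_cycle_system_right_even_general n hn b
end

section
/- Let n ≥ 4. There is no integer vector b = (b₁,…,b_n) satisfying the D_n cycle system with marking p = n−1 and excess q = 1. (Indeed the equations at the vertices n−1 and n force 2·b_{n−1} = b_{n−2} + 1 and 2·b_n = b_{n−2}, which cannot both hold for integers.) -/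
/-- Excluded case in the proof of Proposition 4.6: for `n ≥ 4`, the `D_n` cycle system
with marking `p = n−1` and excess `q = 1` has no integral solution (the equations at the
vertices `n−1` and `n` force `2b_{n−1} = b_{n−2} + 1` and `2b_n = b_{n−2}`). -/
theorem dn_cycle_system_no_integral_excess_one (n : ℕ) (hn : 4 ≤ n) :
    ¬ ∃ b : ℕ → ℤ, dnSystem n (n - 1) 1 b := by
  rintro ⟨b, hb⟩
  have h1 := hb (n - 1) (by omega) (by omega)
  have h2 := hb n (by omega) (by omega)
  have e1 : (∑ j ∈ Finset.Icc 1 n, if dnAdj n (n - 1) j then b j else 0) = b (n - 2) := by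
    rw [Finset.sum_eq_single_of_mem (n - 2) (by simp [Finset.mem_Icc]; omega)]
    · exact if_pos (Or.inr (Or.inr (Or.inr ⟨rfl, Or.inl rfl⟩)))
    · intro j hj hne
      simp only [Finset.mem_Icc] at hj
      rw [if_neg]; simp only [dnAdj]; omega
  have e2 : (∑ j ∈ Finset.Icc 1 n, if dnAdj n n j then b j else 0) = b (n - 2) := by
    rw [Finset.sum_eq_single_of_mem (n - 2) (by simp [Finset.mem_Icc]; omega)]
    · exact if_pos (Or.inr (Or.inr (Or.inr ⟨rfl, Or.inr rfl⟩)))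
    · intro j hj hne
      simp only [Finset.mem_Icc] at hj
      rw [if_neg]; simp only [dnAdj]; omega
  rw [e1, if_pos rfl, if_neg (by omega)] at h1
  rw [e2, if_neg (by omega), if_neg (by omega)] at h2
  omega
end
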